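/- Let B be a topological space and b₁,…,b_r : B → ℂ continuous functions with r ≥ 1. Let U = ⋃ᵢ {x : bᵢ(x) ≠ 0} and F = {(x,ℓ) ∈ U × ℂ^r : ∑ᵢ bᵢ(x)ℓᵢ = 1}. Then the projection π : F → U is a homotopy equivalence. -/

import Mathlib

/-!
The fibre of `F` over `x ∈ U` is the affine hyperplane `{ℓ | b(x) ⬝ ℓ = 1}`, which contains the
point `conj b(x) / ‖b(x)‖²` depending continuously on `x`. This gives a section of `π`; since the
fibres are convex, the straight-line homotopy from `section ∘ π` to the identity stays inside `F`.
-/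

open Matrix ContinuousMap
open scoped ComplexOrder

theorem dotProduct_inv_smul_star_self {n K : Type*} [Fintype n] [Field K] [PartialOrder K]
    [StarRing K] [StarOrderedRing K] {v : n → K} (hv : v ≠ 0) :
    v ⬝ᵥ ((v ⬝ᵥ star v)⁻¹ • star v) = 1 := by
  rw [dotProduct_smul, smul_eq_mul, inv_mul_cancel₀ (dotProduct_self_star_eq_zero.not.2 hv)]

theorem continuousOn_inv_smul_star_self {n 𝕜 : Type*} [Fintype n] [RCLike 𝕜] :
    ContinuousOn (fun v : n → 𝕜 => (v ⬝ᵥ star v)⁻¹ • star v) {v | v ≠ 0} :=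
  ((continuous_id.dotProduct continuous_star).continuousOn.inv₀
    fun _ hv => dotProduct_self_star_eq_zero.not.2 hv).smul continuous_star.continuousOn

section ConvexFibres

variable {X E : Type*} [TopologicalSpace X] [AddCommMonoid E] [Module ℝ E] [TopologicalSpace E]
  [ContinuousAdd E] [ContinuousSMul ℝ E] {U : Set X} {F : Set (X × E)}

def projectionToBase (hFU : ∀ p ∈ F, p.1 ∈ U) : C(F, U) :=
  ⟨fun p => ⟨(p : X × E).1, hFU _ p.2⟩, by fun_prop⟩

def graphSection (σ : C(U, E)) (hσF : ∀ x : U, ((x : X), σ x) ∈ F) : C(U, F) :=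
  ⟨fun x => ⟨(x, σ x), hσF x⟩, by fun_prop⟩

def straightLineHomotopy (hFU : ∀ p ∈ F, p.1 ∈ U) (hconv : ∀ x ∈ U, Convex ℝ {v | (x, v) ∈ F})
    (σ : C(U, E)) (hσF : ∀ x : U, ((x : X), σ x) ∈ F) :
    ((graphSection σ hσF).comp (projectionToBase hFU)).Homotopy (ContinuousMap.id F) where
  toFun q :=
    ⟨((q.2 : X × E).1, (1 - (q.1 : ℝ)) • σ (projectionToBase hFU q.2) + (q.1 : ℝ) • (q.2 : X × E).2),
      hconv _ (hFU _ q.2.2) (hσF (projectionToBase hFU q.2)) q.2.2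
        (sub_nonneg.2 q.1.2.2) q.1.2.1 (sub_add_cancel 1 _)⟩
  continuous_toFun := by fun_prop
  map_zero_left p := by simp [projectionToBase, graphSection]
  map_one_left p := by simp

theorem exists_homotopyEquiv_fst_of_convex_fibres (hFU : ∀ p ∈ F, p.1 ∈ U)
    (hconv : ∀ x ∈ U, Convex ℝ {v | (x, v) ∈ F})
    (σ : C(U, E)) (hσF : ∀ x : U, ((x : X), σ x) ∈ F) :
    ∃ h : HomotopyEquiv F U, ∀ p : F, (h p : X) = (p : X × E).1 :=
  have hπσ : (projectionToBase hFU).comp (graphSection σ hσF) = ContinuousMap.id U := rfl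
  ⟨⟨projectionToBase hFU, graphSection σ hσF, ⟨straightLineHomotopy hFU hconv σ hσF⟩,
    hπσ ▸ .refl _⟩, fun _ => rfl⟩

end ConvexFibres

theorem projection_homotopyEquiv_general
    {B : Type*} [TopologicalSpace B] {r : ℕ}
    (b : Fin r → B → ℂ) (hb : ∀ i, Continuous (b i))
    (U : Set B) (hU : U = ⋃ i, {x : B | b i x ≠ 0})
    (F : Set (B × (Fin r → ℂ)))
    (hF : F = {p : B × (Fin r → ℂ) | p.1 ∈ U ∧ ∑ i, b i p.1 * p.2 i = 1}) :
    ∃ h : ContinuousMap.HomotopyEquiv F U,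
      ∀ p : F, (h.toFun p : B) = (p : B × (Fin r → ℂ)).1 := by
  set c : B → Fin r → ℂ := fun x i => b i x
  have mem_U : ∀ x, x ∈ U ↔ c x ≠ 0 := by simp [hU, c, Function.ne_iff]
  have mem_F : ∀ p, p ∈ F ↔ p.1 ∈ U ∧ c p.1 ⬝ᵥ p.2 = 1 := by simp [hF, c, dotProduct]
  let σ : C(U, Fin r → ℂ) :=
    ⟨fun x => (c x ⬝ᵥ star (c x))⁻¹ • star (c x),
      continuousOn_inv_smul_star_self.comp_continuous
        ((continuous_pi hb).comp continuous_subtype_val) fun x => (mem_U x).1 x.2⟩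
  refine exists_homotopyEquiv_fst_of_convex_fibres (fun p hp => ((mem_F p).1 hp).1) ?_ σ ?_
  · intro x hx
    simp only [mem_F, hx, true_and]
    exact (convex_singleton (1 : ℂ)).linear_preimage (dotProductBilin ℂ ℝ (c x))
  · exact fun x => (mem_F _).2 ⟨x.2, dotProduct_inv_smul_star_self ((mem_U x).1 x.2)⟩

theorem projection_homotopyEquiv
    {B : Type*} [TopologicalSpace B] {r : ℕ} (hr : 1 ≤ r)
    (b : Fin r → B → ℂ) (hb : ∀ i, Continuous (b i))
    (U : Set B) (hU : U = ⋃ i, {x : B | b i x ≠ 0})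
    (F : Set (B × (Fin r → ℂ)))
    (hF : F = {p : B × (Fin r → ℂ) | p.1 ∈ U ∧ ∑ i, b i p.1 * p.2 i = 1}) :
    ∃ h : ContinuousMap.HomotopyEquiv F U,
      ∀ p : F, (h.toFun p : B) = (p : B × (Fin r → ℂ)).1 :=
  projection_homotopyEquiv_general b hb U hU F hF
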